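/- arXiv:1412.1793 — 3 statements merged into one kernel-verified Lean document; each statement's English description precedes it below -/
import Mathlib

section
/- For all integers n and ℓ ≥ 1, there exists a graph G_{n,ℓ} whose distance VC-dimension is at most 18 and such that the 2VC-dimension of the B_ℓ-hypergraph of G_{n,ℓ} is at least n. -/
open SimpleGraph

def gball {V : Type*} (G : SimpleGraph V) (v : V) (k : ℕ) : Set V :=
  {w | G.edist v w ≤ (k : ℕ∞)}

/-- `X` is shattered by the B-hypergraph of `G` (hyperedges: all balls of all radii). -/
def BShattered {V : Type*} (G : SimpleGraph V) (X : Set V) : Prop :=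
  ∀ Y ⊆ X, ∃ (v : V) (k : ℕ), gball G v k ∩ X = Y

/-- The distance VC-dimension of `G` is at most `d`. -/
def distVCdimLE {V : Type*} (G : SimpleGraph V) (d : ℕ) : Prop :=
  ∀ (S : Set V) (X : Set S), BShattered (G.induce S) X → X.ncard ≤ d

/-- `X` is 2-shattered by the `B_ℓ`-hypergraph of `G` (hyperedges: balls of radius `ℓ`). -/
def Bl2Shattered {V : Type*} (G : SimpleGraph V) (ℓ : ℕ) (X : Set V) : Prop :=
  ∀ Y ⊆ X, Y.ncard = 2 → ∃ v : V, gball G v ℓ ∩ X = Y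

/-!
The graph is the clique `K_n` together with, for every pair `{x, z}`, a path of `ℓ` new vertices
whose first vertex is joined to both `x` and `z`. The last vertex of the path of `{x, z}` is at
distance `ℓ` from `x` and `z` and at distance `ℓ + 1` from every other clique vertex, so the balls
of radius `ℓ` 2-shatter the clique.

Distances in an induced subgraph `G[S]` are explicit: away from the component of the clique,
`G[S]` is a union of paths, and inside it two vertices on different branches are at distance
`depth u + depth w`, plus one unless they hang from a common clique vertex of `S`. A branch holds
at most two points of a shattered set `X`, so off the branch of `v` a ball `B(v, r)` cuts `X` by
depth: it takes every point of depth `< r - depth v`, none of depth `> r - depth v`, and, at depth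
`r - depth v`, the points sharing one of the at most two roots of `v`. For the least `μ` with
three points of `X` of depth `≤ μ`, this leaves at most two points below `μ` and two above it,
and at depth `μ` at most five points per root, hence at most thirteen in all: `|X| ≤ 17`.
-/

namespace SimpleGraph

variable {V W : Type*} {G : SimpleGraph V} {G' : SimpleGraph W}

lemma edist_map_le (f : G →g G') (u v : V) : G'.edist (f u) (f v) ≤ G.edist u v := by
  rcases eq_or_ne (G.edist u v) ⊤ with h | h
  · simp [h]
  · obtain ⟨p, hp⟩ := exists_walk_of_edist_ne_top h
    rw [← hp, ← p.length_map f]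
    exact edist_le _

lemma Iso.edist_eq (f : G ≃g G') (u v : V) : G'.edist (f u) (f v) = G.edist u v :=
  le_antisymm (edist_map_le f.toHom u v) (by simpa using edist_map_le f.symm.toHom (f u) (f v))

lemma le_add_edist_of_forall_adj {f : V → ℕ∞} (hf : ∀ a b, G.Adj a b → f a ≤ f b + 1)
    (u v : V) : f u ≤ f v + G.edist u v := by
  rcases eq_or_ne (G.edist u v) ⊤ with h | h
  · simp [h]
  obtain ⟨p, hp⟩ := exists_walk_of_edist_ne_top h
  rw [← hp]
  clear hp h
  induction p with
  | nil => simp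
  | cons hab p ih =>
    calc _ ≤ _ + 1 := hf _ _ hab
      _ ≤ f _ + p.length + 1 := by gcongr
      _ = _ := by rw [Walk.length_cons, Nat.cast_succ, add_assoc]

end SimpleGraph

lemma Set.exists_lt_lt_of_injOn {α β : Type*} [LinearOrder β] {A : Set α} {f : α → β}
    (hf : A.InjOn f) (h : 3 ≤ A.ncard) : ∃ a ∈ A, ∃ b ∈ A, ∃ c ∈ A, f a < f b ∧ f b < f c := by
  obtain ⟨B, hBA, hB⟩ := Set.exists_subset_card_eq h
  obtain ⟨x, y, z, hxy, hxz, hyz, rfl⟩ := Set.ncard_eq_three.1 hB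
  have hx : x ∈ A := hBA (by simp)
  have hy : y ∈ A := hBA (by simp)
  have hz : z ∈ A := hBA (by simp)
  rcases (hf.ne hx hy hxy).lt_or_gt with h₁ | h₁ <;>
    rcases (hf.ne hx hz hxz).lt_or_gt with h₂ | h₂ <;>
    rcases (hf.ne hy hz hyz).lt_or_gt with h₃ | h₃
  all_goals first
    | (exfalso; order)
    | (refine ⟨x, hx, y, hy, z, hz, ?_, ?_⟩ <;> order)
    | (refine ⟨x, hx, z, hz, y, hy, ?_, ?_⟩ <;> order)
    | (refine ⟨y, hy, x, hx, z, hz, ?_, ?_⟩ <;> order)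
    | (refine ⟨y, hy, z, hz, x, hx, ?_, ?_⟩ <;> order)
    | (refine ⟨z, hz, x, hx, y, hy, ?_, ?_⟩ <;> order)
    | (refine ⟨z, hz, y, hy, x, hx, ?_, ?_⟩ <;> order)

namespace CliquePaths

abbrev Pair (n : ℕ) := {p : Fin n × Fin n // p.1 < p.2}

/-- `inl x` is the vertex `x` of the clique `K_n`; `inr (e, i)` is the `i`-th vertex of a path of
`ℓ` vertices hanging from both ends of the pair `e`, where `inr (e, 0)` is adjacent to both ends. -/
abbrev Vertex (n ℓ : ℕ) := Fin n ⊕ (Pair n × Fin ℓ)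

variable {n ℓ : ℕ}

def IsRoot : Vertex n ℓ → Fin n → Prop
  | .inl x, t => t = x
  | .inr (e, _), t => t = e.1.1 ∨ t = e.1.2

def depth : Vertex n ℓ → ℕ
  | .inl _ => 0
  | .inr (_, i) => i + 1

def branch : Vertex n ℓ → Fin n ⊕ Pair n
  | .inl x => .inl x
  | .inr (e, _) => .inr e

def graph (n ℓ : ℕ) : SimpleGraph (Vertex n ℓ) where
  Adj
    | .inl x, .inl z => x ≠ z
    | .inl x, .inr (e, i) => (i : ℕ) = 0 ∧ IsRoot (.inr (e, i)) x
    | .inr (e, i), .inl x => (i : ℕ) = 0 ∧ IsRoot (.inr (e, i)) x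
    | .inr (e, i), .inr (f, j) => e = f ∧ ((i : ℕ) + 1 = j ∨ (j : ℕ) + 1 = i)
  symm := ⟨by rintro (x | ⟨e, i⟩) (z | ⟨f, j⟩) h <;> simp only at h ⊢ <;> tauto⟩
  loopless := ⟨by rintro (x | ⟨e, i⟩) h <;> simp only at h <;> omega⟩

variable {u a w : Vertex n ℓ} {e : Pair n} {i j : Fin ℓ}

lemma depth_inl (x : Fin n) : depth (.inl x : Vertex n ℓ) = 0 := rfl

lemma depth_inr : depth (.inr (e, i)) = i + 1 := rfl

lemma depth_le (u : Vertex n ℓ) : depth u ≤ ℓ := by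
  rcases u with x | ⟨e, i⟩
  · exact Nat.zero_le _
  · exact i.isLt

lemma eq_inl_of_branch_eq {x : Fin n} (h : branch w = .inl x) : w = .inl x := by
  rcases w with z | ⟨f, j⟩ <;> simp_all [branch]

lemma exists_eq_inr_of_branch_eq (h : branch w = .inr e) : ∃ j, w = .inr (e, j) := by
  rcases w with z | ⟨f, j⟩ <;> simp_all [branch]

lemma eq_of_branch_eq_of_depth_eq (hb : branch u = branch w)
    (hd : depth u = depth w) : u = w := by
  rcases u with x | ⟨e, i⟩ <;> rcases w with z | ⟨f, j⟩ <;>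
    simp_all [branch, depth, Fin.ext_iff]

lemma isRoot_iff_of_branch_eq (h : branch u = branch w) {t : Fin n} :
    IsRoot u t ↔ IsRoot w t := by
  rcases u with x | ⟨e, i⟩ <;> rcases w with z | ⟨f, j⟩ <;> simp_all [branch, IsRoot]

lemma exists_isRoot_forall (u : Vertex n ℓ) :
    ∃ s₁ s₂, IsRoot u s₁ ∧ IsRoot u s₂ ∧ ∀ t, IsRoot u t → t = s₁ ∨ t = s₂ := by
  rcases u with x | ⟨e, i⟩
  · exact ⟨x, x, rfl, rfl, fun t ht => Or.inl ht⟩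
  · exact ⟨e.1.1, e.1.2, Or.inl rfl, Or.inr rfl, fun t ht => ht⟩

lemma branch_eq_of_isRoot {t s : Fin n} (hts : t ≠ s) (hut : IsRoot u t)
    (hus : IsRoot u s) (hwt : IsRoot w t) (hws : IsRoot w s) : branch u = branch w := by
  rcases u with x | ⟨e, i⟩
  · exact absurd (hut.trans hus.symm) hts
  rcases w with z | ⟨f, j⟩
  · exact absurd (hwt.trans hws.symm) hts
  have he := e.2
  have hf := f.2
  simp only [IsRoot, branch, Sum.inr.injEq, Subtype.ext_iff, Prod.ext_iff, Fin.ext_iff,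
    Fin.lt_def] at *
  omega

variable (S : Set (Vertex n ℓ))

abbrev induced : SimpleGraph S := (graph n ℓ).induce S

def Spans (e : Pair n) (i j : Fin ℓ) : Prop := ∀ k ∈ Set.uIcc i j, .inr (e, k) ∈ S

def Attached : Vertex n ℓ → Prop
  | .inl x => .inl x ∈ S
  | .inr (e, i) => (∀ k ≤ i, .inr (e, k) ∈ S) ∧ (.inl e.1.1 ∈ S ∨ .inl e.1.2 ∈ S)

def SharesRoot (u w : Vertex n ℓ) : Prop := ∃ t, IsRoot u t ∧ IsRoot w t ∧ .inl t ∈ S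

def Linked (u w : Vertex n ℓ) : Prop :=
  (Attached S u ∧ Attached S w) ∨ ∃ e i j, u = .inr (e, i) ∧ w = .inr (e, j) ∧ Spans S e i j

open Classical in
noncomputable def inducedDist (u w : Vertex n ℓ) : ℕ :=
  if branch u = branch w then Nat.dist (depth u) (depth w)
  else depth u + depth w + if SharesRoot S u w then 0 else 1

variable {S}

lemma Spans.symm (h : Spans S e i j) : Spans S e j i := fun k hk => h k (Set.uIcc_comm i j ▸ hk)

lemma spans_self (h : .inr (e, i) ∈ S) : Spans S e i i := by
  simpa [Spans] using h

lemma Spans.of_mem_uIcc {k : Fin ℓ} (h : Spans S e i j) (hk : k ∈ Set.uIcc i j) :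
    Spans S e i k :=
  fun m hm => h m (Set.uIcc_subset_uIcc Set.left_mem_uIcc hk hm)

lemma Attached.mem_of_le {k : Fin ℓ} (h : Attached S (.inr (e, i))) (hk : k ≤ i) :
    .inr (e, k) ∈ S :=
  h.1 k hk

lemma Attached.of_le {j : Fin ℓ} (h : Attached S (.inr (e, i))) (hj : j ≤ i) :
    Attached S (.inr (e, j)) :=
  ⟨fun _ hk => h.mem_of_le (hk.trans hj), h.2⟩

lemma Attached.exists_root (h : Attached S u) : ∃ t, IsRoot u t ∧ .inl t ∈ S := by
  rcases u with x | ⟨e, i⟩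
  · exact ⟨x, rfl, h⟩
  · rcases h.2 with h' | h'
    exacts [⟨_, Or.inl rfl, h'⟩, ⟨_, Or.inr rfl, h'⟩]

lemma Attached.of_spans (ha : Attached S (.inr (e, i))) (hs : Spans S e i j) :
    Attached S (.inr (e, j)) := by
  refine ⟨fun k (hk : k ≤ j) => ?_, ha.2⟩
  rcases le_total k i with h | h
  · exact ha.mem_of_le h
  · exact hs k (Set.mem_uIcc.2 (Or.inl ⟨h, hk⟩))

lemma Spans.of_attached (hi : Attached S (.inr (e, i))) (hj : Attached S (.inr (e, j))) :
    Spans S e i j := by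
  intro k hk
  rw [Set.mem_uIcc] at hk
  rcases le_or_gt k i with h | h
  · exact hi.mem_of_le h
  · exact hj.mem_of_le (by omega)

lemma attached_univ (u : Vertex n ℓ) : Attached Set.univ u := by
  rcases u with x | ⟨e, i⟩
  · trivial
  · exact ⟨fun _ _ => trivial, Or.inl trivial⟩

lemma Attached.of_adj (hu : u ∈ S) (h : (graph n ℓ).Adj u a) (ha : Attached S a) :
    Attached S u := by
  rcases u with x | ⟨e, i⟩
  · exact hu
  rcases a with z | ⟨f, j⟩
  · obtain ⟨hi, hz⟩ := h
    refine ⟨fun k (hk : k ≤ i) => ?_, ?_⟩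
    · rwa [show k = i by omega]
    · rcases hz with rfl | rfl
      exacts [Or.inl ha, Or.inr ha]
  · obtain ⟨rfl, hij⟩ := h
    refine ⟨fun k (hk : k ≤ i) => ?_, ha.2⟩
    rcases le_or_gt k j with h | h
    · exact ha.mem_of_le h
    · rwa [show k = i by omega]

lemma sharesRoot_comm : SharesRoot S u w ↔ SharesRoot S w u := by
  simp only [SharesRoot]
  exact exists_congr fun t => by tauto

lemma sharesRoot_iff_of_branch_eq (h : branch u = branch a) :
    SharesRoot S u w ↔ SharesRoot S a w := by
  simp only [SharesRoot, isRoot_iff_of_branch_eq h]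

lemma sharesRoot_inl_iff {s : Fin n} {w : Vertex n ℓ} :
    SharesRoot S (.inl s) w ↔ IsRoot w s ∧ .inl s ∈ S := by
  simp [SharesRoot, IsRoot]

lemma linked_self (hu : u ∈ S) : Linked S u u := by
  rcases u with x | ⟨e, i⟩
  · exact Or.inl ⟨hu, hu⟩
  · exact Or.inr ⟨e, i, i, rfl, rfl, spans_self hu⟩

lemma Linked.symm (h : Linked S u w) : Linked S w u := by
  rcases h with ⟨hu, hw⟩ | ⟨e, i, j, rfl, rfl, hs⟩
  exacts [Or.inl ⟨hw, hu⟩, Or.inr ⟨e, j, i, rfl, rfl, hs.symm⟩]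

lemma Linked.attached (h : Linked S u w) (hw : Attached S w) : Attached S u := by
  rcases h with ⟨hu, -⟩ | ⟨e, i, j, rfl, rfl, hs⟩
  exacts [hu, hw.of_spans hs.symm]

lemma Linked.spans (h : Linked S (.inr (e, i)) (.inr (e, j))) : Spans S e i j := by
  rcases h with ⟨hi, hj⟩ | ⟨f, i', j', hi, hj, hs⟩
  · exact .of_attached hi hj
  · simp only [Sum.inr.injEq, Prod.mk.injEq] at hi hj
    obtain ⟨rfl, rfl⟩ := hi
    obtain ⟨-, rfl⟩ := hj
    exact hs

lemma Linked.branch_eq (h : Linked S u w) (hu : ¬ Attached S u) : branch u = branch w := by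
  rcases h with ⟨hu', -⟩ | ⟨e, i, j, rfl, rfl, -⟩
  exacts [absurd hu' hu, rfl]

lemma Linked.of_adj (hu : u ∈ S) (h : (graph n ℓ).Adj u a) (hl : Linked S a w) :
    Linked S u w := by
  by_cases hw : Attached S w
  · exact Or.inl ⟨(hl.attached hw).of_adj hu h, hw⟩
  obtain ⟨-, hw'⟩ | ⟨e, p, q, rfl, rfl, hs⟩ := hl
  · exact absurd hw' hw
  rcases u with x | ⟨f, i⟩
  · obtain ⟨hp, hx⟩ := h
    have ha : Attached S (.inr (e, p)) := by
      refine ⟨fun k (hk : k ≤ p) => ?_, ?_⟩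
      · rw [show k = p by omega]; exact hs p Set.left_mem_uIcc
      · rcases hx with rfl | rfl
        exacts [Or.inl hu, Or.inr hu]
    exact absurd (ha.of_spans hs) hw
  · obtain ⟨rfl, hip⟩ := h
    refine Or.inr ⟨f, i, q, rfl, rfl, fun k hk => ?_⟩
    rw [Set.mem_uIcc] at hk
    by_cases hki : k = i
    · exact hki ▸ hu
    · exact hs k (Set.mem_uIcc.2 (by omega))

lemma inducedDist_of_branch_eq (h : branch u = branch w) :
    inducedDist S u w = Nat.dist (depth u) (depth w) := if_pos h

lemma inducedDist_of_sharesRoot (hb : branch u ≠ branch w) (h : SharesRoot S u w) :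
    inducedDist S u w = depth u + depth w := by
  rw [inducedDist, if_neg hb, if_pos h, add_zero]

lemma inducedDist_of_not_sharesRoot (hb : branch u ≠ branch w) (h : ¬ SharesRoot S u w) :
    inducedDist S u w = depth u + depth w + 1 := by
  rw [inducedDist, if_neg hb, if_neg h]

lemma inducedDist_inr_inr : inducedDist S (.inr (e, i)) (.inr (e, j)) = Nat.dist i j := by
  rw [inducedDist_of_branch_eq (u := .inr (e, i)) (w := .inr (e, j)) rfl]
  simp only [depth, Nat.dist]
  omega

lemma inducedDist_self (u : Vertex n ℓ) : inducedDist S u u = 0 := by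
  simp [inducedDist_of_branch_eq]

lemma inducedDist_le_add (u w : Vertex n ℓ) : inducedDist S u w ≤ depth u + depth w + 1 := by
  unfold inducedDist
  split_ifs <;> (try unfold Nat.dist) <;> omega

lemma add_le_inducedDist (h : branch u ≠ branch w) : depth u + depth w ≤ inducedDist S u w := by
  rw [inducedDist, if_neg h]
  omega

lemma inducedDist_le_of_branch_eq (hb : branch u = branch a) (hd : depth u ≤ depth a + 1)
    (hd' : depth a ≤ depth u + 1) (w : Vertex n ℓ) : inducedDist S u w ≤ inducedDist S a w + 1 := by
  by_cases hw : branch u = branch w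
  · rw [inducedDist_of_branch_eq hw, inducedDist_of_branch_eq (hb.symm.trans hw)]
    simp only [Nat.dist]
    omega
  · have hw' : branch a ≠ branch w := fun h => hw (hb.trans h)
    by_cases hs : SharesRoot S u w
    · rw [inducedDist_of_sharesRoot hw hs,
        inducedDist_of_sharesRoot hw' ((sharesRoot_iff_of_branch_eq hb).1 hs)]
      omega
    · rw [inducedDist_of_not_sharesRoot hw hs,
        inducedDist_of_not_sharesRoot hw' (mt (sharesRoot_iff_of_branch_eq hb).2 hs)]
      omega

lemma inducedDist_le_of_depth_le (hw : branch a ≠ branch w) (hd : depth u ≤ depth a) :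
    inducedDist S u w ≤ inducedDist S a w + 1 :=
  (inducedDist_le_add u w).trans (by have := add_le_inducedDist (S := S) hw; omega)

lemma inducedDist_inl_le_inl (x z : Fin n) (w : Vertex n ℓ) :
    inducedDist S (.inl x) w ≤ inducedDist S (.inl z) w + 1 := by
  by_cases hw : branch (.inl z : Vertex n ℓ) = branch w
  · obtain rfl := eq_inl_of_branch_eq hw.symm
    simpa [inducedDist_of_branch_eq, depth_inl] using
      inducedDist_le_add (S := S) (.inl x) (.inl z)
  · exact inducedDist_le_of_depth_le hw le_rfl

lemma inducedDist_inl_le_inr {x : Fin n} (hi : (i : ℕ) = 0) (hx : IsRoot (.inr (e, i)) x)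
    (hxS : .inl x ∈ S) (w : Vertex n ℓ) :
    inducedDist S (.inl x) w ≤ inducedDist S (.inr (e, i)) w + 1 := by
  by_cases hw : branch (.inr (e, i) : Vertex n ℓ) = branch w
  · obtain ⟨k, rfl⟩ := exists_eq_inr_of_branch_eq hw.symm
    have hs : SharesRoot S (.inl x) (.inr (e, k)) := ⟨x, rfl, hx, hxS⟩
    rw [inducedDist_inr_inr, inducedDist_of_sharesRoot (by simp [branch]) hs]
    simp only [depth_inl, depth_inr, Nat.dist]
    omega
  · exact inducedDist_le_of_depth_le hw (Nat.zero_le _)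

lemma inducedDist_inr_le_inl {z : Fin n} (hi : (i : ℕ) = 0) (hz : IsRoot (.inr (e, i)) z)
    (hzS : .inl z ∈ S) (w : Vertex n ℓ) :
    inducedDist S (.inr (e, i)) w ≤ inducedDist S (.inl z) w + 1 := by
  have hdu : depth (.inr (e, i) : Vertex n ℓ) = 1 := by simp [depth_inr, hi]
  by_cases hw : branch (.inr (e, i) : Vertex n ℓ) = branch w
  · obtain ⟨k, rfl⟩ := exists_eq_inr_of_branch_eq hw.symm
    have := add_le_inducedDist (S := S) (u := .inl z) (w := .inr (e, k)) (by simp [branch])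
    rw [inducedDist_inr_inr]
    simp only [depth_inl, depth_inr, Nat.dist] at this ⊢
    omega
  by_cases hw' : branch (.inl z : Vertex n ℓ) = branch w
  · obtain rfl := eq_inl_of_branch_eq hw'.symm
    rw [inducedDist_of_sharesRoot hw ⟨z, hz, rfl, hzS⟩, inducedDist_of_branch_eq rfl, hdu]
    simp [depth_inl]
  by_cases hs : SharesRoot S (.inl z) w
  · obtain ⟨t, rfl, ht, htS⟩ := hs
    rw [inducedDist_of_sharesRoot hw ⟨t, hz, ht, htS⟩,
      inducedDist_of_sharesRoot hw' ⟨t, rfl, ht, htS⟩, hdu, depth_inl]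
    omega
  · have := inducedDist_le_add (S := S) (.inr (e, i)) w
    rw [inducedDist_of_not_sharesRoot hw' hs, depth_inl]
    rw [hdu] at this
    omega

lemma inducedDist_le_of_adj (hu : u ∈ S) (ha : a ∈ S) (h : (graph n ℓ).Adj u a)
    (w : Vertex n ℓ) : inducedDist S u w ≤ inducedDist S a w + 1 := by
  rcases u with x | ⟨e, i⟩ <;> rcases a with z | ⟨f, j⟩
  · exact inducedDist_inl_le_inl x z w
  · exact inducedDist_inl_le_inr h.1 h.2 hu w
  · exact inducedDist_inr_le_inl h.1 h.2 ha w
  · obtain ⟨rfl, hij⟩ := h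
    exact inducedDist_le_of_branch_eq (u := .inr (e, i)) (a := .inr (e, j)) rfl
      (by simp only [depth_inr]; omega) (by simp only [depth_inr]; omega) w

lemma edist_le_of_spans (hs : Spans S e i j) (hi : .inr (e, i) ∈ S) (hj : .inr (e, j) ∈ S) :
    (induced S).edist ⟨_, hi⟩ ⟨_, hj⟩ ≤ Nat.dist i j := by
  wlog hij : i ≤ j generalizing i j
  · rw [SimpleGraph.edist_comm, Nat.dist_comm]
    exact this hs.symm hj hi (le_of_not_ge hij)
  obtain ⟨d, hd⟩ : ∃ d, (j : ℕ) = i + d := ⟨j - i, by omega⟩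
  rw [show Nat.dist i j = d by simp only [Nat.dist]; omega]
  induction d generalizing j with
  | zero => simp [show i = j by omega]
  | succ d ih =>
    let k : Fin ℓ := ⟨i + d, by omega⟩
    have hk : k ∈ Set.uIcc i j := Set.mem_uIcc.2 (Or.inl ⟨by simp [Fin.le_def, k], by
      simp only [Fin.le_def, k]; omega⟩)
    have hkj : (graph n ℓ).Adj (.inr (e, k)) (.inr (e, j)) := ⟨rfl, Or.inl (by simp [k]; omega)⟩
    calc (induced S).edist ⟨_, hi⟩ ⟨_, hj⟩
        ≤ (induced S).edist ⟨_, hi⟩ ⟨_, hs k hk⟩ + (induced S).edist ⟨_, hs k hk⟩ ⟨_, hj⟩ :=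
          SimpleGraph.edist_triangle
      _ ≤ d + 1 := add_le_add (ih (hs.of_mem_uIcc hk) _ (by simp [Fin.le_def, k]) rfl)
          (edist_le_one_iff_adj_or_eq.2 (Or.inl hkj))
      _ = (d + 1 : ℕ) := by push_cast; rfl

lemma edist_le_depth {u : S} (hu : Attached S u) {t : Fin n} (ht : IsRoot u.1 t)
    (htS : .inl t ∈ S) : (induced S).edist u ⟨.inl t, htS⟩ ≤ depth u.1 := by
  obtain ⟨x | ⟨e, i⟩, hu'⟩ := u
  · obtain rfl : t = x := ht
    simp
  · let k₀ : Fin ℓ := ⟨0, i.pos⟩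
    have hk₀ : .inr (e, k₀) ∈ S := hu.mem_of_le (Fin.le_def.2 (Nat.zero_le _))
    have hs : Spans S e i k₀ := fun k hk => hu.mem_of_le (by
      rw [Set.mem_uIcc] at hk; simp only [Fin.le_def, k₀] at hk ⊢; omega)
    have hadj : (graph n ℓ).Adj (.inr (e, k₀)) (.inl t) := ⟨rfl, ht⟩
    calc (induced S).edist ⟨_, hu'⟩ ⟨.inl t, htS⟩
        ≤ (induced S).edist ⟨_, hu'⟩ ⟨_, hk₀⟩ + (induced S).edist ⟨_, hk₀⟩ ⟨.inl t, htS⟩ :=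
          SimpleGraph.edist_triangle
      _ ≤ Nat.dist i k₀ + 1 :=
          add_le_add (edist_le_of_spans hs hu' hk₀) (edist_le_one_iff_adj_or_eq.2 (Or.inl hadj))
      _ = depth (.inr (e, i) : Vertex n ℓ) := by simp [depth_inr, Nat.dist, k₀]

lemma edist_le_inducedDist {u w : S} (h : Linked S u w) :
    (induced S).edist u w ≤ inducedDist S u w := by
  obtain ⟨u, hu⟩ := u
  obtain ⟨w, hw⟩ := w
  have column (e : Pair n) (i j : Fin ℓ) (hs : Spans S e i j) (hi : .inr (e, i) ∈ S)
      (hj : .inr (e, j) ∈ S) :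
      (induced S).edist ⟨_, hi⟩ ⟨_, hj⟩ ≤ inducedDist S (.inr (e, i)) (.inr (e, j)) := by
    rw [inducedDist_inr_inr]
    exact edist_le_of_spans hs hi hj
  obtain ⟨hau, haw⟩ | ⟨e, i, j, rfl, rfl, hs⟩ := h
  swap
  · exact column e i j hs hu hw
  by_cases hb : branch u = branch w
  · rcases u with x | ⟨e, i⟩
    · obtain rfl := eq_inl_of_branch_eq hb.symm
      simp
    · obtain ⟨j, rfl⟩ := exists_eq_inr_of_branch_eq hb.symm
      exact column e i j (.of_attached hau haw) hu hw
  by_cases hs : SharesRoot S u w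
  · obtain ⟨t, hut, hwt, htS⟩ := hs
    rw [inducedDist_of_sharesRoot hb ⟨t, hut, hwt, htS⟩]
    calc (induced S).edist ⟨u, hu⟩ ⟨w, hw⟩
        ≤ (induced S).edist ⟨u, hu⟩ ⟨.inl t, htS⟩ + (induced S).edist ⟨.inl t, htS⟩ ⟨w, hw⟩ :=
          SimpleGraph.edist_triangle
      _ ≤ depth u + depth w := add_le_add (edist_le_depth hau hut htS)
          (SimpleGraph.edist_comm.trans_le (edist_le_depth haw hwt htS))
      _ = (depth u + depth w : ℕ) := by push_cast; rfl
  · obtain ⟨t, hut, htS⟩ := hau.exists_root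
    obtain ⟨s, hws, hsS⟩ := haw.exists_root
    have hts : (graph n ℓ).Adj (.inl t) (.inl s) := fun h => hs ⟨t, hut, h ▸ hws, htS⟩
    rw [inducedDist_of_not_sharesRoot hb hs]
    calc (induced S).edist ⟨u, hu⟩ ⟨w, hw⟩
        ≤ (induced S).edist ⟨u, hu⟩ ⟨.inl t, htS⟩ + (induced S).edist ⟨.inl t, htS⟩ ⟨w, hw⟩ :=
          SimpleGraph.edist_triangle
      _ ≤ (induced S).edist ⟨u, hu⟩ ⟨.inl t, htS⟩ + ((induced S).edist ⟨.inl t, htS⟩ ⟨.inl s, hsS⟩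
          + (induced S).edist ⟨.inl s, hsS⟩ ⟨w, hw⟩) := by gcongr; exact SimpleGraph.edist_triangle
      _ ≤ depth u + (1 + depth w) := by
          gcongr
          · exact edist_le_depth hau hut htS
          · exact edist_le_one_iff_adj_or_eq.2 (Or.inl hts)
          · exact SimpleGraph.edist_comm.trans_le (edist_le_depth haw hws hsS)
      _ = (depth u + depth w + 1 : ℕ) := by push_cast; ring

open Classical in
theorem edist_induced (u w : S) :
    (induced S).edist u w = if Linked S u w then (inducedDist S u w : ℕ∞) else ⊤ := by
  have lower := le_add_edist_of_forall_adj (G := induced S)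
    (f := fun x => if Linked S x w then (inducedDist S x w : ℕ∞) else ⊤) ?_ u w
  · simp only [linked_self w.2, if_true, inducedDist_self, Nat.cast_zero, zero_add] at lower
    split_ifs with h
    · exact le_antisymm (edist_le_inducedDist h) (by simpa [h] using lower)
    · simpa [h] using lower
  · intro a b hab
    by_cases hb : Linked S b w
    · simp only [if_pos hb, if_pos (hb.of_adj a.2 hab)]
      exact_mod_cast inducedDist_le_of_adj a.2 b.2 hab w
    · simp [hb]

lemma mem_gball_induced_iff {v w : S} {r : ℕ} :
    w ∈ gball (induced S) v r ↔ Linked S v w ∧ inducedDist S v w ≤ r := by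
  simp only [gball, Set.mem_ofPred_eq, edist_induced]
  split_ifs with h <;> simp [h]

lemma Attached.of_mem_gball {v w : S} {r : ℕ} (h : w ∈ gball (induced S) v r)
    (hw : Attached S w) : Attached S v :=
  (mem_gball_induced_iff.1 h).1.attached hw

lemma mem_gball_induced_iff_of_branch_ne {v w : S} {r : ℕ} (hv : Attached S v)
    (hw : Attached S w) (hb : branch w.1 ≠ branch v.1) :
    w ∈ gball (induced S) v r ↔
      depth v.1 + depth w.1 < r ∨ depth v.1 + depth w.1 = r ∧ SharesRoot S v w := by
  rw [mem_gball_induced_iff, and_iff_right (show Linked S v w from Or.inl ⟨hv, hw⟩)]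
  by_cases hs : SharesRoot S v w
  · rw [inducedDist_of_sharesRoot (Ne.symm hb) hs]
    simp only [hs, and_true]
    omega
  · rw [inducedDist_of_not_sharesRoot (Ne.symm hb) hs]
    simp only [hs, and_false, or_false]
    omega

lemma edist_graph (u w : Vertex n ℓ) : (graph n ℓ).edist u w = inducedDist Set.univ u w := by
  have := (induceUnivIso (graph n ℓ)).edist_eq ⟨u, Set.mem_univ u⟩ ⟨w, Set.mem_univ w⟩
  rwa [edist_induced, if_pos (show Linked Set.univ u w from
    Or.inl ⟨attached_univ u, attached_univ w⟩)] at this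

lemma inl_mem_gball_iff {t : Fin n} :
    .inl t ∈ gball (graph n ℓ) (.inr (e, i)) (i + 1) ↔ t = e.1.1 ∨ t = e.1.2 := by
  have hb : branch (.inr (e, i) : Vertex n ℓ) ≠ branch (.inl t : Vertex n ℓ) := by simp [branch]
  have hs : SharesRoot Set.univ (.inr (e, i)) (.inl t : Vertex n ℓ) ↔ t = e.1.1 ∨ t = e.1.2 := by
    simp [SharesRoot, IsRoot]
  simp only [gball, Set.mem_ofPred_eq, edist_graph, Nat.cast_le]
  by_cases h : t = e.1.1 ∨ t = e.1.2
  · simp [inducedDist_of_sharesRoot hb (hs.2 h), depth_inr, depth_inl, h]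
  · simp [inducedDist_of_not_sharesRoot hb (mt hs.1 h), depth_inr, depth_inl, h]

lemma bl2Shattered_range_inl (hℓ : 1 ≤ ℓ) :
    Bl2Shattered (graph n ℓ) ℓ (Set.range Sum.inl) := by
  obtain ⟨m, rfl⟩ : ∃ m, ℓ = m + 1 := ⟨ℓ - 1, by omega⟩
  intro Y hY hY2
  obtain ⟨a, b, hab, rfl⟩ := Set.ncard_eq_two.1 hY2
  obtain ⟨x, rfl⟩ := hY (Set.mem_insert _ _)
  obtain ⟨z, rfl⟩ := hY (Set.mem_insert_of_mem _ rfl)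
  wlog hxz : x < z generalizing x z
  · rw [Set.pair_comm]
    exact this z x hab.symm (by rw [Set.pair_comm]; exact hY) (by rw [Set.pair_comm]; exact hY2)
      (lt_of_le_of_ne (not_lt.1 hxz) fun h => hab (h ▸ rfl))
  refine ⟨.inr (⟨(x, z), hxz⟩, Fin.last m), Set.ext fun w => ?_⟩
  constructor
  · rintro ⟨hw, t, rfl⟩
    rcases inl_mem_gball_iff.1 hw with rfl | rfl <;> simp
  · rintro (rfl | rfl)
    exacts [⟨inl_mem_gball_iff.2 (Or.inl rfl), x, rfl⟩, ⟨inl_mem_gball_iff.2 (Or.inr rfl), z, rfl⟩]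

lemma level_branch_subsingleton (μ : ℕ) (b : Fin n ⊕ Pair n) :
    {w : S | depth w.1 = μ ∧ branch w.1 = b}.Subsingleton := fun _ hw _ hw' =>
  Subtype.ext (eq_of_branch_eq_of_depth_eq (hw.2.trans hw'.2.symm) (hw.1.trans hw'.1.symm))

lemma level_isRoot_subsingleton {t s : Fin n} (hts : t ≠ s) (μ : ℕ) :
    {w : S | depth w.1 = μ ∧ IsRoot w.1 t ∧ IsRoot w.1 s}.Subsingleton := fun _ hw _ hw' =>
  Subtype.ext (eq_of_branch_eq_of_depth_eq
    (branch_eq_of_isRoot hts hw.2.1 hw.2.2 hw'.2.1 hw'.2.2) (hw.1.trans hw'.1.symm))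

lemma ncard_level_branch_le_one (μ : ℕ) (b : Fin n ⊕ Pair n) :
    {w : S | depth w.1 = μ ∧ branch w.1 = b}.ncard ≤ 1 :=
  Set.ncard_le_one_iff_subsingleton.2 (level_branch_subsingleton μ b)

variable {X Y : Set S} {v : S} {r μ : ℕ}

lemma mem_gball_of_mem_trace (hT : gball (induced S) v r ∩ X = Y) {y : S} (hy : y ∈ Y) :
    y ∈ gball (induced S) v r :=
  ((Set.ext_iff.1 hT y).2 hy).1

lemma mem_trace (hT : gball (induced S) v r ∩ X = Y) {y : S} (hy : y ∈ gball (induced S) v r)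
    (hyX : y ∈ X) : y ∈ Y :=
  hT ▸ ⟨hy, hyX⟩

lemma mem_of_mem_trace (hT : gball (induced S) v r ∩ X = Y) {y : S} (hy : y ∈ Y) : y ∈ X :=
  ((Set.ext_iff.1 hT y).2 hy).2

lemma depth_add_le_of_mem_trace (hatt : ∀ w ∈ X, Attached S w)
    (hT : gball (induced S) v r ∩ X = Y) {y : S} (hy : y ∈ Y) (hb : branch y.1 ≠ branch v.1) :
    depth v.1 + depth y.1 < r ∨ depth v.1 + depth y.1 = r ∧ SharesRoot S v y := by
  have hyr := mem_gball_of_mem_trace hT hy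
  have hya := hatt y (mem_of_mem_trace hT hy)
  exact (mem_gball_induced_iff_of_branch_ne (Attached.of_mem_gball hyr hya) hya hb).1 hyr

lemma mem_gball_of_between {w₁ w₂ w₃ : S} (h₁ : w₁ ∈ gball (induced S) v r)
    (h₃ : w₃ ∈ gball (induced S) v r) (hb₁ : branch w₁.1 = branch w₂.1)
    (hb₃ : branch w₃.1 = branch w₂.1) (hd₁ : depth w₁.1 ≤ depth w₂.1)
    (hd₃ : depth w₂.1 ≤ depth w₃.1) : w₂ ∈ gball (induced S) v r := by
  obtain ⟨x | ⟨e, j₂⟩, hw₂⟩ := w₂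
  · rwa [show (⟨.inl x, hw₂⟩ : S) = w₁ from Subtype.ext (eq_inl_of_branch_eq hb₁).symm]
  obtain ⟨j₁, hj₁⟩ := exists_eq_inr_of_branch_eq hb₁
  obtain ⟨j₃, hj₃⟩ := exists_eq_inr_of_branch_eq hb₃
  rw [hj₁, depth_inr, depth_inr] at hd₁
  rw [hj₃, depth_inr, depth_inr] at hd₃
  by_cases hv : branch v.1 = .inr e
  · obtain ⟨p, hp⟩ := exists_eq_inr_of_branch_eq hv
    rw [mem_gball_induced_iff, hp, hj₁, inducedDist_inr_inr] at h₁
    rw [mem_gball_induced_iff, hp, hj₃, inducedDist_inr_inr] at h₃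
    have hs : Spans S e p j₂ := by
      rcases le_or_gt p j₂ with h | h
      · exact h₃.1.spans.of_mem_uIcc (Set.mem_uIcc.2 (Or.inl ⟨h, by omega⟩))
      · exact h₁.1.spans.of_mem_uIcc (Set.mem_uIcc.2 (Or.inr ⟨by omega, h.le⟩))
    rw [mem_gball_induced_iff, hp, inducedDist_inr_inr]
    refine ⟨Or.inr ⟨e, p, j₂, rfl, rfl, hs⟩, ?_⟩
    simp only [Nat.dist] at h₁ h₃ ⊢
    omega
  have hva : Attached S v := by
    by_contra hna
    exact hv ((mem_gball_induced_iff.1 h₁).1.branch_eq hna ▸ hj₁ ▸ rfl)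
  have ha₃ : Attached S w₃ := (mem_gball_induced_iff.1 h₃).1.symm.attached hva
  rw [hj₃] at ha₃
  have ha₂ : Attached S (.inr (e, j₂)) := ha₃.of_le (by omega)
  have hb : branch (.inr (e, j₂) : Vertex n ℓ) ≠ branch v.1 := Ne.symm hv
  rw [mem_gball_induced_iff_of_branch_ne hva (hj₃ ▸ ha₃) (hb₃.trans_ne hb)] at h₃
  rw [mem_gball_induced_iff_of_branch_ne hva ha₂ hb]
  rw [hj₃, depth_inr] at h₃
  have hs (h : SharesRoot S v.1 (.inr (e, j₃))) : SharesRoot S v.1 (.inr (e, j₂)) :=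
    sharesRoot_comm.1 ((sharesRoot_iff_of_branch_eq rfl).1 (sharesRoot_comm.1 h))
  simp only [depth_inr]
  rcases h₃ with h | ⟨h, h'⟩
  · omega
  · rcases eq_or_lt_of_le hd₃ with h'' | h''
    · exact Or.inr ⟨by omega, hs h'⟩
    · omega

lemma ncard_branch_le_two (hX : BShattered (induced S) X) (b : Fin n ⊕ Pair n) :
    {w ∈ X | branch w.1 = b}.ncard ≤ 2 := by
  by_contra! h
  have hinj : {w ∈ X | branch w.1 = b}.InjOn fun w => depth w.1 := fun w hw w' hw' hd =>
    Subtype.ext (eq_of_branch_eq_of_depth_eq (hw.2.trans hw'.2.symm) hd)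
  obtain ⟨w₁, h₁, w₂, h₂, w₃, h₃, h₁₂, h₂₃⟩ := Set.exists_lt_lt_of_injOn hinj (by omega)
  obtain ⟨v, r, hT⟩ := hX {w₁, w₃} (Set.insert_subset h₁.1 (Set.singleton_subset_iff.2 h₃.1))
  have hw₂ : w₂ ∈ gball (induced S) v r :=
    mem_gball_of_between (mem_gball_of_mem_trace hT (by simp))
      (mem_gball_of_mem_trace hT (by simp)) (h₁.2.trans h₂.2.symm) (h₃.2.trans h₂.2.symm)
      h₁₂.le h₂₃.le
  rcases mem_trace hT hw₂ h₂.1 with rfl | rfl <;> simp at h₁₂ h₂₃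

lemma exists_mem_branch_ne (hX : BShattered (induced S) X) {A : Set S} (hA : A ⊆ X)
    (h : 3 ≤ A.ncard) (b : Fin n ⊕ Pair n) : ∃ w ∈ A, branch w.1 ≠ b := by
  by_contra! h'
  have hsub : A ⊆ {w ∈ X | branch w.1 = b} := fun w hw => ⟨hA hw, h' w hw⟩
  have := (Set.ncard_le_ncard hsub).trans (ncard_branch_le_two hX b)
  omega

/-- Outside the component of the clique, `induced S` is a union of paths, on which no three points
are shattered. -/
lemma attached_of_bshattered (hX : BShattered (induced S) X) (h : 3 ≤ X.ncard) {w : S}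
    (hw : w ∈ X) : Attached S w := by
  by_contra hna
  obtain ⟨v, r, hT⟩ := hX X subset_rfl
  have hlinked {x : S} (hx : x ∈ X) : Linked S v x :=
    (mem_gball_induced_iff.1 (mem_gball_of_mem_trace hT hx)).1
  have hv : ¬ Attached S v := fun hv => hna ((hlinked hw).symm.attached hv)
  obtain ⟨x, hx, hb⟩ := exists_mem_branch_ne hX subset_rfl h (branch v.1)
  exact hb ((hlinked hx).branch_eq hv).symm

lemma ncard_depth_gt_le_two (hX : BShattered (induced S) X) (hatt : ∀ w ∈ X, Attached S w)
    (h : 3 ≤ {w ∈ X | depth w.1 ≤ μ}.ncard) : {w ∈ X | μ < depth w.1}.ncard ≤ 2 := by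
  obtain ⟨v, r, hT⟩ := hX {w ∈ X | μ < depth w.1} (Set.sep_subset _ _)
  refine (Set.ncard_le_ncard (t := {w ∈ X | branch w.1 = branch v.1})
    fun y hy => ⟨hy.1, ?_⟩).trans (ncard_branch_le_two hX (branch v.1))
  by_contra hb
  have hv := Attached.of_mem_gball (mem_gball_of_mem_trace hT hy) (hatt y hy.1)
  obtain ⟨w, hw, hwb⟩ := exists_mem_branch_ne hX (Set.sep_subset _ _) h (branch v.1)
  have hwr : w ∈ gball (induced S) v r := by
    have := depth_add_le_of_mem_trace hatt hT hy hb
    have := hy.2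
    have := hw.2
    exact (mem_gball_induced_iff_of_branch_ne hv (hatt w hw.1) hwb).2 (Or.inl (by omega))
  exact absurd hw.2 (not_le.2 (mem_trace hT hwr hw.1).2)

lemma ncard_trace_le_one (hatt : ∀ w ∈ X, Attached S w) (hT : gball (induced S) v r ∩ X = Y)
    (hY : ∀ y ∈ Y, depth y.1 = μ) (hr : r < depth v.1 + μ) : Y.ncard ≤ 1 := by
  refine (Set.ncard_le_ncard (t := {w : S | depth w.1 = μ ∧ branch w.1 = branch v.1})
    fun y hy => ⟨hY y hy, ?_⟩).trans (ncard_level_branch_le_one μ (branch v.1))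
  by_contra hb
  have := depth_add_le_of_mem_trace hatt hT hy hb
  have := hY y hy
  omega

lemma ncard_le_ncard_trace_add_one (hatt : ∀ w ∈ X, Attached S w)
    (hT : gball (induced S) v r ∩ X = Y) (hv : Attached S v) {L : Set S}
    (hL : ∀ w ∈ L, w ∈ X ∧ depth w.1 = μ)
    (hr : depth v.1 + μ < r ∨ depth v.1 + μ = r ∧ ∀ w ∈ L, SharesRoot S v w) :
    L.ncard ≤ Y.ncard + 1 := by
  have hsub : L \ {w | depth w.1 = μ ∧ branch w.1 = branch v.1} ⊆ Y := by
    rintro w ⟨hwL, hwb⟩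
    obtain ⟨hwX, hwμ⟩ := hL w hwL
    refine mem_trace hT ((mem_gball_induced_iff_of_branch_ne hv (hatt w hwX)
      fun hb => hwb ⟨hwμ, hb⟩).2 ?_) hwX
    rw [hwμ]
    exact hr.imp_right fun h => ⟨h.1, h.2 w hwL⟩
  have := Set.ncard_le_ncard_sdiff_add_ncard L {w : S | depth w.1 = μ ∧ branch w.1 = branch v.1}
  have := Set.ncard_le_ncard hsub
  have := ncard_level_branch_le_one (S := S) μ (branch v.1)
  omega

lemma exists_trace_subset (hatt : ∀ w ∈ X, Attached S w) (hT : gball (induced S) v r ∩ X = Y)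
    (hY : ∀ y ∈ Y, depth y.1 = μ) (hr : r = depth v.1 + μ) :
    ∃ s₁ s₂, IsRoot v.1 s₁ ∧ IsRoot v.1 s₂ ∧
      Y ⊆ {w | depth w.1 = μ ∧ branch w.1 = branch v.1} ∪
        {w ∈ Y | SharesRoot S (.inl s₁) w.1} ∪ {w ∈ Y | SharesRoot S (.inl s₂) w.1} := by
  obtain ⟨s₁, s₂, h₁, h₂, hroots⟩ := exists_isRoot_forall v.1
  refine ⟨s₁, s₂, h₁, h₂, fun y hy => ?_⟩
  by_cases hb : branch y.1 = branch v.1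
  · exact Or.inl (Or.inl ⟨hY y hy, hb⟩)
  obtain ⟨s, hvs, hys, hsS⟩ : SharesRoot S v y := by
    have := depth_add_le_of_mem_trace hatt hT hy hb
    rw [hY y hy] at this
    exact (this.resolve_left (by omega)).2
  rcases hroots s hvs with rfl | rfl
  exacts [Or.inl (Or.inr ⟨hy, sharesRoot_inl_iff.2 ⟨hys, hsS⟩⟩),
    Or.inr ⟨hy, sharesRoot_inl_iff.2 ⟨hys, hsS⟩⟩]

lemma ncard_star_le_five (hX : BShattered (induced S) X) (hatt : ∀ w ∈ X, Attached S w)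
    (μ : ℕ) (t : Fin n) : {w ∈ X | depth w.1 = μ ∧ SharesRoot S (.inl t) w.1}.ncard ≤ 5 := by
  set L := {w ∈ X | depth w.1 = μ ∧ SharesRoot S (.inl t) w.1}
  by_contra! hL
  obtain ⟨Y, hYL, hY⟩ := Set.exists_subset_card_eq (show 4 ≤ L.ncard by omega)
  obtain ⟨v, r, hT⟩ := hX Y fun y hy => (hYL hy).1
  obtain ⟨y, hy⟩ := Set.nonempty_of_ncard_ne_zero (show Y.ncard ≠ 0 by omega)
  have hv := Attached.of_mem_gball (mem_gball_of_mem_trace hT hy) (hatt y (hYL hy).1)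
  have htS : .inl t ∈ S := (sharesRoot_inl_iff.1 (hYL hy).2.2).2
  have hYμ (y : S) (hy : y ∈ Y) : depth y.1 = μ := (hYL hy).2.1
  have large (hr : depth v.1 + μ < r ∨ depth v.1 + μ = r ∧ ∀ w ∈ L, SharesRoot S v w) : False := by
    have := ncard_le_ncard_trace_add_one hatt hT hv (fun w hw => ⟨hw.1, hw.2.1⟩) hr
    omega
  rcases lt_trichotomy r (depth v.1 + μ) with hr | rfl | hr
  · have := ncard_trace_le_one hatt hT hYμ hr
    omega
  swap
  · exact large (Or.inl hr)
  by_cases hvt : IsRoot v.1 t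
  · exact large (Or.inr ⟨rfl, fun w hw => ⟨t, hvt, (sharesRoot_inl_iff.1 hw.2.2).1, htS⟩⟩)
  obtain ⟨s₁, s₂, h₁, h₂, hsub⟩ := exists_trace_subset hatt hT hYμ rfl
  have hsub' : Y ⊆ {w | depth w.1 = μ ∧ branch w.1 = branch v.1} ∪
      {w | depth w.1 = μ ∧ IsRoot w.1 t ∧ IsRoot w.1 s₁} ∪
      {w | depth w.1 = μ ∧ IsRoot w.1 t ∧ IsRoot w.1 s₂} := by
    refine hsub.trans (Set.union_subset_union (Set.union_subset_union le_rfl ?_) ?_) <;>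
      exact fun w hw => ⟨hYμ w hw.1, (sharesRoot_inl_iff.1 (hYL hw.1).2.2).1,
        (sharesRoot_inl_iff.1 hw.2).1⟩
  have := Set.ncard_le_ncard hsub'
  have := Set.ncard_union_le ({w : S | depth w.1 = μ ∧ branch w.1 = branch v.1} ∪
      {w | depth w.1 = μ ∧ IsRoot w.1 t ∧ IsRoot w.1 s₁})
    {w | depth w.1 = μ ∧ IsRoot w.1 t ∧ IsRoot w.1 s₂}
  have := Set.ncard_union_le {w : S | depth w.1 = μ ∧ branch w.1 = branch v.1}
    {w | depth w.1 = μ ∧ IsRoot w.1 t ∧ IsRoot w.1 s₁}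
  have := ncard_level_branch_le_one (S := S) μ (branch v.1)
  have hne₁ : t ≠ s₁ := fun h => hvt (h ▸ h₁)
  have hne₂ : t ≠ s₂ := fun h => hvt (h ▸ h₂)
  have := Set.ncard_le_one_iff_subsingleton.2 (level_isRoot_subsingleton (S := S) hne₁ μ)
  have := Set.ncard_le_one_iff_subsingleton.2 (level_isRoot_subsingleton (S := S) hne₂ μ)
  omega

lemma ncard_level_le_thirteen (hX : BShattered (induced S) X) (hatt : ∀ w ∈ X, Attached S w)
    (μ : ℕ) : {w ∈ X | depth w.1 = μ}.ncard ≤ 13 := by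
  set L := {w ∈ X | depth w.1 = μ}
  by_contra! hL
  obtain ⟨Y, hYL, hY⟩ := Set.exists_subset_card_eq (show 12 ≤ L.ncard by omega)
  obtain ⟨v, r, hT⟩ := hX Y fun y hy => (hYL hy).1
  obtain ⟨y, hy⟩ := Set.nonempty_of_ncard_ne_zero (show Y.ncard ≠ 0 by omega)
  have hv := Attached.of_mem_gball (mem_gball_of_mem_trace hT hy) (hatt y (hYL hy).1)
  have hYμ (y : S) (hy : y ∈ Y) : depth y.1 = μ := (hYL hy).2
  rcases lt_trichotomy r (depth v.1 + μ) with hr | rfl | hr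
  · have := ncard_trace_le_one hatt hT hYμ hr
    omega
  · obtain ⟨s₁, s₂, -, -, hsub⟩ := exists_trace_subset hatt hT hYμ rfl
    have hstar (s : Fin n) : {w ∈ Y | SharesRoot S (.inl s) w.1}.ncard ≤ 5 :=
      (Set.ncard_le_ncard (t := {w ∈ X | depth w.1 = μ ∧ SharesRoot S (.inl s) w.1})
        fun w hw => ⟨(hYL hw.1).1, hYμ w hw.1, hw.2⟩).trans
        (ncard_star_le_five hX hatt μ s)
    have := Set.ncard_le_ncard hsub
    have := Set.ncard_union_le ({w : S | depth w.1 = μ ∧ branch w.1 = branch v.1} ∪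
      {w ∈ Y | SharesRoot S (.inl s₁) w.1}) {w ∈ Y | SharesRoot S (.inl s₂) w.1}
    have := Set.ncard_union_le {w : S | depth w.1 = μ ∧ branch w.1 = branch v.1}
      {w ∈ Y | SharesRoot S (.inl s₁) w.1}
    have := ncard_level_branch_le_one (S := S) μ (branch v.1)
    have := hstar s₁
    have := hstar s₂
    omega
  · have := ncard_le_ncard_trace_add_one hatt hT hv (L := L) (fun w hw => hw) (Or.inl hr)
    omega

theorem distVCdimLE_graph : distVCdimLE (graph n ℓ) 17 := by
  intro S X hX
  by_contra! h
  have hatt (w : S) (hw : w ∈ X) : Attached S w := attached_of_bshattered hX (by omega) hw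
  have hex : ∃ μ, 3 ≤ {w ∈ X | depth w.1 ≤ μ}.ncard :=
    ⟨ℓ, by rw [Set.sep_eq_self_iff_mem_true.2 fun w _ => depth_le w.1]; omega⟩
  obtain ⟨μ, hμ, hmin⟩ : ∃ μ, 3 ≤ {w ∈ X | depth w.1 ≤ μ}.ncard ∧
      ∀ m < μ, ¬ 3 ≤ {w ∈ X | depth w.1 ≤ m}.ncard :=
    ⟨Nat.find hex, Nat.find_spec hex, fun _ => Nat.find_min hex⟩
  have hlow : {w ∈ X | depth w.1 < μ}.ncard ≤ 2 := by
    rcases Nat.eq_zero_or_pos μ with h0 | hpos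
    · simp [h0]
    · have := hmin (μ - 1) (by omega)
      simp only [Nat.lt_iff_le_pred hpos]
      omega
  have hhigh := ncard_depth_gt_le_two hX hatt hμ
  have hlevel := ncard_level_le_thirteen hX hatt μ
  have hsplit : X ⊆ {w ∈ X | depth w.1 < μ} ∪ {w ∈ X | depth w.1 = μ} ∪
      {w ∈ X | μ < depth w.1} := fun w hw => by
    rcases lt_trichotomy (depth w.1) μ with h | h | h
    exacts [Or.inl (Or.inl ⟨hw, h⟩), Or.inl (Or.inr ⟨hw, h⟩), Or.inr ⟨hw, h⟩]
  have := Set.ncard_le_ncard hsplit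
  have := Set.ncard_union_le ({w ∈ X | depth w.1 < μ} ∪ {w ∈ X | depth w.1 = μ})
    {w ∈ X | μ < depth w.1}
  have := Set.ncard_union_le {w ∈ X | depth w.1 < μ} {w ∈ X | depth w.1 = μ}
  omega

end CliquePaths

/-- For all `n` and `ℓ ≥ 1` there is a graph of distance VC-dimension at most 18 whose
`B_ℓ`-hypergraph has 2VC-dimension at least `n`. -/
theorem stmt4 (n ℓ : ℕ) (hℓ : 1 ≤ ℓ) :
    ∃ (V : Type) (_ : Fintype V) (G : SimpleGraph V),
      distVCdimLE G 18 ∧ ∃ X : Set V, n ≤ X.ncard ∧ Bl2Shattered G ℓ X := by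
  refine ⟨CliquePaths.Vertex n ℓ, inferInstance, CliquePaths.graph n ℓ,
    fun S X hX => (CliquePaths.distVCdimLE_graph S X hX).trans (by norm_num),
    Set.range Sum.inl, ?_, CliquePaths.bl2Shattered_range_inl hℓ⟩
  rw [Set.ncard_range_of_injective Sum.inl_injective, Nat.card_eq_fintype_card, Fintype.card_fin]
end

section
/- Let G=(V,E) be a graph and ℓ an integer. If there exist two disjoint subsets A, B of V with |B| = 2^{|A|} that are ℓ-disconnectable, then the distance VC-dimension of G is at least |A|. -/
/-!
Index `B` by the subsets of `A` via a surjection `b ↦ f b`, and delete the sets `S a b` for exactly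
the pairs with `a ∉ f b`. By ℓ-disconnectability, in the remaining graph `a ∈ A` lies in the ball
of radius `ℓ` around `b ∈ B` if and only if `a ∈ f b`, so these balls shatter `A`.
-/

open SimpleGraph

/-- The distance VC-dimension of `G` is at least `n`: some induced subgraph of `G` has a set of
size at least `n` shattered by its balls. -/
def distVCdimGE {V : Type*} (G : SimpleGraph V) (n : ℕ) : Prop :=
  ∃ (S : Set V) (X : Set S), BShattered (G.induce S) X ∧ n ≤ X.ncard

/-- `d(a,b) > ℓ` holds in the graph obtained from `G` by deleting the vertex set `W`:
every walk from `a` to `b` in `G` of length at most `ℓ` meets `W`. -/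
def DistGTAfterDeleting {V : Type*} (G : SimpleGraph V) (a b : V) (ℓ : ℕ) (W : Set V) : Prop :=
  ∀ p : G.Walk a b, p.length ≤ ℓ → ∃ v ∈ p.support, v ∈ W

theorem Finset.exists_forall_subset_exists_mem_eq {α : Type*} {A B : Finset α}
    (h : 2 ^ A.card ≤ B.card) : ∃ f : α → Finset α, ∀ A' ⊆ A, ∃ b ∈ B, f b = A' := by
  obtain ⟨g⟩ : Nonempty (A.powerset ↪ B) :=
    Function.Embedding.nonempty_of_card_le (by simpa [Finset.card_powerset] using h)
  have : Nonempty A.powerset := ⟨⟨∅, Finset.empty_mem_powerset A⟩⟩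
  have hinj : Function.Injective fun x => (g x : α) := Subtype.val_injective.comp g.injective
  refine ⟨fun b => (Function.invFun (fun x => (g x : α)) b).1, fun A' hA' => ?_⟩
  refine ⟨g ⟨A', Finset.mem_powerset.mpr hA'⟩, (g _).2, ?_⟩
  simp only [Function.leftInverse_invFun hinj _]

namespace SimpleGraph

variable {V : Type*} {G : SimpleGraph V}

theorem edist_le_natCast_iff {u v : V} {ℓ : ℕ} :
    G.edist u v ≤ ℓ ↔ ∃ p : G.Walk u v, p.length ≤ ℓ := by
  refine ⟨fun h => ?_, fun ⟨p, hp⟩ => p.edist_le.trans (by exact_mod_cast hp)⟩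
  obtain ⟨p, hp⟩ := exists_walk_of_edist_ne_top (h.trans_lt (ENat.natCast_lt_top ℓ)).ne
  exact ⟨p, by exact_mod_cast hp ▸ h⟩

theorem edist_induce_compl_le_iff {W : Set V} {a b : V} (ha : a ∈ Wᶜ) (hb : b ∈ Wᶜ) {ℓ : ℕ} :
    (G.induce Wᶜ).edist ⟨a, ha⟩ ⟨b, hb⟩ ≤ ℓ ↔ ¬ DistGTAfterDeleting G a b ℓ W := by
  simp only [edist_le_natCast_iff, DistGTAfterDeleting, not_forall, not_exists, not_and]
  constructor
  · rintro ⟨q, hq⟩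
    refine ⟨q.map (Embedding.induce Wᶜ).toHom, (Walk.length_map _ q).trans_le hq, fun v hv => ?_⟩
    have hv' : v ∈ (q.map (Embedding.induce Wᶜ).toHom).support := hv
    rw [Walk.support_map, List.mem_map] at hv'
    obtain ⟨x, -, rfl⟩ := hv'
    exact x.2
  · rintro ⟨p, hp, hW⟩
    refine ⟨p.induce Wᶜ hW, ?_⟩
    rwa [← Walk.length_map (Embedding.induce Wᶜ).toHom, Walk.map_induce]

theorem distVCdimGE_of_bShattered_induce {s : Set V} {A : Finset V} (hA : ↑A ⊆ s)
    (h : BShattered (G.induce s) (Subtype.val ⁻¹' ↑A)) : distVCdimGE G A.card :=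
  ⟨s, _, h, (Set.ncard_preimage_of_injective_subset_range Subtype.val_injective
    (by simpa using hA)).trans (Set.ncard_coe_finset A) |>.ge⟩

theorem bShattered_induce_of_edist_le_iff {s : Set V} {A B : Finset V} (hB : ↑B ⊆ s)
    {f : V → Finset V} (hf : ∀ A' ⊆ A, ∃ b ∈ B, f b = A') {ℓ : ℕ}
    (hdist : ∀ a ∈ A, ∀ b ∈ B, ∀ (ha : a ∈ s) (hb : b ∈ s),
      (G.induce s).edist ⟨b, hb⟩ ⟨a, ha⟩ ≤ ℓ ↔ a ∈ f b) :
    BShattered (G.induce s) (Subtype.val ⁻¹' ↑A) := by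
  classical
  intro Y hY
  obtain ⟨b, hb, hfb⟩ := hf (A.filter fun a => ∃ h : a ∈ s, ⟨a, h⟩ ∈ Y) (Finset.filter_subset _ _)
  refine ⟨⟨b, hB hb⟩, ℓ, Set.ext fun ⟨a, ha⟩ => ⟨fun ⟨hball, haA⟩ => ?_, fun haY => ?_⟩⟩
  · obtain ⟨-, _, haY⟩ := Finset.mem_filter.mp (hfb ▸ (hdist a haA b hb ha (hB hb)).mp hball)
    exact haY
  · have haA : a ∈ A := hY haY
    exact ⟨(hdist a haA b hb ha (hB hb)).mpr (hfb ▸ Finset.mem_filter.mpr ⟨haA, ha, haY⟩), haA⟩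

end SimpleGraph

theorem stmt5_general {V : Type*} (G : SimpleGraph V) (ℓ : ℕ)
    (A B : Finset V) (hcard : B.card = 2 ^ A.card)
    (S : V → V → Set V)
    (hSdisj : ∀ a ∈ A, ∀ b ∈ B, Disjoint (S a b) ((A : Set V) ∪ (B : Set V)))
    (hdisc : ∀ C : Finset (V × V), C ⊆ A ×ˢ B → ∀ a ∈ A, ∀ b ∈ B,
      (DistGTAfterDeleting G a b ℓ {v | ∃ q ∈ C, v ∈ S q.1 q.2} ↔ (a, b) ∈ C)) :
    distVCdimGE G A.card := by
  classical
  obtain ⟨f, hf⟩ := Finset.exists_forall_subset_exists_mem_eq hcard.ge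
  set C := (A ×ˢ B).filter fun q => q.1 ∉ f q.2
  have hC : C ⊆ A ×ˢ B := Finset.filter_subset _ _
  set W : Set V := {v | ∃ q ∈ C, v ∈ S q.1 q.2}
  have hAB : ↑A ∪ ↑B ⊆ Wᶜ := by
    rintro v hv ⟨q, hq, hvq⟩
    obtain ⟨hqA, hqB⟩ := Finset.mem_product.mp (hC hq)
    exact Set.disjoint_left.mp (hSdisj q.1 hqA q.2 hqB) hvq hv
  refine distVCdimGE_of_bShattered_induce (Set.subset_union_left.trans hAB)
    (bShattered_induce_of_edist_le_iff (Set.subset_union_right.trans hAB) hf (ℓ := ℓ)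
      fun a ha b hb ha' hb' => ?_)
  rw [edist_comm, edist_induce_compl_le_iff, hdisc C hC a ha b hb]
  simp [C, ha, hb]

/-- if disjoint sets `A`, `B` with `|B| = 2^{|A|}` are ℓ-disconnectable
(witnessed by the family `S a b`, `(a,b) ∈ A × B`, of sets disjoint from `A ∪ B`), then the
distance VC-dimension of `G` is at least `|A|`. -/
theorem stmt5 {V : Type*} [Fintype V] [DecidableEq V] (G : SimpleGraph V) (ℓ : ℕ)
    (A B : Finset V) (hAB : Disjoint A B) (hcard : B.card = 2 ^ A.card)
    (S : V → V → Set V)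
    (hSdisj : ∀ a ∈ A, ∀ b ∈ B, Disjoint (S a b) ((A : Set V) ∪ (B : Set V)))
    (hdisc : ∀ C : Finset (V × V), C ⊆ A ×ˢ B → ∀ a ∈ A, ∀ b ∈ B,
      (DistGTAfterDeleting G a b ℓ {v | ∃ q ∈ C, v ∈ S q.1 q.2} ↔ (a, b) ∈ C)) :
    distVCdimGE G A.card :=
  stmt5_general G ℓ A B hcard S hSdisj hdisc
end

section
/- Let k > 0 and n be integers. Every k-interference square matrix that has no proper submatrix of size n has size less than k·n³. -/
/-!
Let `N` be the size and average over all `n`-subsets `B'` of the columns. A row `a` is spoiled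
by `B'` only if `B'` contains a pair `b ≠ c` with `c ∈ m a b`; each row has at most `k·N` such
pairs, and each pair lies in a fraction `n(n-1)/(N(N-1))` of the subsets, so some `B'` spoils at
most `k·n·(n-1)` rows. On the unspoiled rows, `a ↦ ⋃_{b ∈ B'} m a b` has out-degree at most
`k·n`, hence some row has total degree at most `2kn`; removing it with its neighbours and
iterating gives `n` rows that do not interfere with each other once
`N - kn(n-1) > (n-1)(2kn+1)`, which `N ≥ kn³` ensures.
-/

open Finset

lemma Nat.choose_two_mul_two (n : ℕ) : n.choose 2 * 2 = n * (n - 1) := by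
  rw [Nat.choose_two_right, Nat.div_mul_cancel (Nat.even_mul_pred_self n).two_dvd]

lemma Nat.le_of_mul_mul_sub_one_le {x T N : ℕ} (h : x * (N * (N - 1)) ≤ N * N * T)
    (hN : T + 2 ≤ N) : x ≤ T := by
  obtain ⟨M, rfl⟩ : ∃ M, N = M + 1 := ⟨N - 1, by omega⟩
  rw [Nat.add_sub_cancel] at h
  have h' : x * M ≤ (M + 1) * T := Nat.le_of_mul_le_mul_left (by linarith) M.succ_pos
  by_contra! hx
  nlinarith

namespace Finset

variable {α : Type*} [DecidableEq α]

section Greedy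

variable (nb : α → Finset α) (d : ℕ)

lemma exists_card_inter_add_card_filter_mem_le {S : Finset α} (hS : S.Nonempty)
    (hd : ∀ a ∈ S, #(nb a) ≤ d) :
    ∃ a ∈ S, #(nb a ∩ S) + #{x ∈ S | a ∈ nb x} ≤ 2 * d := by
  refine exists_le_of_sum_le hS ?_
  have hin : ∑ a ∈ S, #{x ∈ S | a ∈ nb x} = ∑ x ∈ S, #(nb x ∩ S) := by
    have := sum_card_bipartiteAbove_eq_sum_card_bipartiteBelow (s := S) (t := S)
      (r := fun x a => a ∈ nb x)
    simpa only [bipartiteAbove, bipartiteBelow, filter_mem_eq_inter, inter_comm S] using this.symm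
  have hout : ∑ a ∈ S, #(nb a ∩ S) ≤ #S * d :=
    sum_le_card_nsmul _ _ _ fun a ha => (card_le_card inter_subset_left).trans (hd a ha)
  rw [sum_add_distrib, hin, sum_const, smul_eq_mul]
  linarith

lemma exists_subset_card_eq_forall_disjoint (j : ℕ) {S : Finset α}
    (hd : ∀ a ∈ S, #(nb a) ≤ d) (hirr : ∀ a ∈ S, a ∉ nb a)
    (hS : j * (2 * d + 1) ≤ #S + 2 * d) :
    ∃ I ⊆ S, #I = j ∧ ∀ a ∈ I, Disjoint (nb a) I := by
  induction j generalizing S with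
  | zero => exact ⟨∅, empty_subset _, card_empty, by simp⟩
  | succ j ih =>
    rw [add_one_mul] at hS
    obtain ⟨a, haS, ha⟩ := exists_card_inter_add_card_filter_mem_le nb d (card_pos.1 (by omega)) hd
    set D := insert a (nb a ∩ S ∪ {x ∈ S | a ∈ nb x})
    have hD : #D ≤ 2 * d + 1 := (card_insert_le _ _).trans (by grw [card_union_le]; omega)
    have hSD : #S ≤ #(S \ D) + #D := card_le_card_sdiff_add_card
    obtain ⟨I, hIS, hIj, hI⟩ := ih (S := S \ D) (fun x hx => hd x (sdiff_subset hx))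
      (fun x hx => hirr x (sdiff_subset hx)) (by omega)
    have hID : ∀ x ∈ I, x ∈ S ∧ x ∉ D := fun x hx => mem_sdiff.1 (hIS hx)
    have haI : a ∉ I := fun h => (hID a h).2 (mem_insert_self _ _)
    refine ⟨insert a I, insert_subset haS (hIS.trans sdiff_subset),
      by rw [card_insert_of_notMem haI, hIj], fun x hx => ?_⟩
    rw [disjoint_insert_right]
    rcases mem_insert.1 hx with rfl | hxI
    · refine ⟨hirr x haS, disjoint_left.2 fun y hy hyI => (hID y hyI).2 ?_⟩
      exact mem_insert_of_mem (mem_union_left _ (mem_inter.2 ⟨hy, (hID y hyI).1⟩))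
    · refine ⟨fun hax => (hID x hxI).2 ?_, hI x hxI⟩
      exact mem_insert_of_mem (mem_union_right _ (mem_filter.2 ⟨(hID x hxI).1, hax⟩))

end Greedy

lemma card_filter_powersetCard_mem_and_mem_le (B : Finset α) (n : ℕ) {b c : α} (hb : b ∈ B)
    (hc : c ∈ B) (hbc : b ≠ c) :
    #{B' ∈ B.powersetCard n | b ∈ B' ∧ c ∈ B'} ≤ (#B - 2).choose (n - 2) := by
  have hbcB : {b, c} ⊆ B := insert_subset hb (singleton_subset_iff.2 hc)
  calc _ ≤ #(((B \ {b, c}).powersetCard (n - 2)).image (· ∪ {b, c})) := by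
        refine card_le_card fun B' hB' => ?_
        obtain ⟨hB'n, hbB', hcB'⟩ := mem_filter.1 hB'
        obtain ⟨hB'B, rfl⟩ := mem_powersetCard.1 hB'n
        have hbcB' : {b, c} ⊆ B' := insert_subset hbB' (singleton_subset_iff.2 hcB')
        refine mem_image.2 ⟨B' \ {b, c}, mem_powersetCard.2 ⟨sdiff_subset_sdiff hB'B le_rfl, ?_⟩,
          sdiff_union_of_subset hbcB'⟩
        rw [card_sdiff_of_subset hbcB', card_pair hbc]
    _ ≤ #((B \ {b, c}).powersetCard (n - 2)) := card_image_le
    _ = (#B - 2).choose (n - 2) := by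
        rw [card_powersetCard, card_sdiff_of_subset hbcB, card_pair hbc]

variable {ι : Type*}

lemma exists_powersetCard_card_filter_mul_choose_two_le (A : Finset ι) (B : Finset α)
    (f : ι → α → Finset α) {k n : ℕ} (hirr : ∀ a ∈ A, ∀ b ∈ B, b ∉ f a b)
    (hf : ∀ a ∈ A, ∀ b ∈ B, #(f a b) ≤ k) (hn : 2 ≤ n) (hnB : n ≤ #B) :
    ∃ B' ∈ B.powersetCard n,
      #{a ∈ A | ∃ b ∈ B', ¬Disjoint (f a b) B'} * (#B).choose 2 ≤ #A * #B * k * n.choose 2 := by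
  set P := B.powersetCard n
  set C := (#B - 2).choose (n - 2)
  have hrow : ∀ a ∈ A, #{B' ∈ P | ∃ b ∈ B', ¬Disjoint (f a b) B'} ≤ #B * (k * C) := by
    intro a ha
    calc _ ≤ #(B.biUnion fun b => (f a b ∩ B).biUnion fun c => {B' ∈ P | b ∈ B' ∧ c ∈ B'}) := by
          refine card_le_card fun B' hB' => ?_
          obtain ⟨hB'P, b, hb, hbad⟩ := mem_filter.1 hB'
          obtain ⟨c, hc, hcB'⟩ := not_disjoint_iff.1 hbad
          have hB'B := (mem_powersetCard.1 hB'P).1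
          simp only [mem_biUnion, mem_inter, mem_filter]
          exact ⟨b, hB'B hb, c, ⟨hc, hB'B hcB'⟩, hB'P, hb, hcB'⟩
      _ ≤ #B * (k * C) := by
          refine card_biUnion_le_card_mul _ _ _ fun b hb => ?_
          refine (card_biUnion_le_card_mul _ _ C fun c hc => ?_).trans ?_
          · have hcb : b ≠ c := fun h => hirr a ha b hb (h ▸ (mem_inter.1 hc).1)
            exact card_filter_powersetCard_mem_and_mem_le B n hb (mem_inter.1 hc).2 hcb
          · gcongr
            exact (card_le_card inter_subset_left).trans (hf a ha b hb)
  have hsum : ∑ B' ∈ P, #{a ∈ A | ∃ b ∈ B', ¬Disjoint (f a b) B'} ≤ #A * (#B * (k * C)) := by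
    calc _ = ∑ a ∈ A, #{B' ∈ P | ∃ b ∈ B', ¬Disjoint (f a b) B'} :=
          (sum_card_bipartiteAbove_eq_sum_card_bipartiteBelow ..).symm
      _ ≤ _ := sum_le_card_nsmul _ _ _ hrow
  refine exists_le_of_sum_le (powersetCard_nonempty.2 hnB) ?_
  calc _ = (∑ B' ∈ P, #{a ∈ A | ∃ b ∈ B', ¬Disjoint (f a b) B'}) * (#B).choose 2 :=
        (sum_mul ..).symm
    _ ≤ #A * (#B * (k * C)) * (#B).choose 2 := by gcongr
    _ = (#B).choose n * (#A * #B * k * n.choose 2) := by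
        have hchoose : (#B).choose n * n.choose 2 = (#B).choose 2 * C := Nat.choose_mul hn
        calc _ = #A * #B * k * ((#B).choose 2 * C) := by ring
          _ = _ := by rw [← hchoose]; ring
    _ = _ := by rw [sum_const, card_powersetCard, smul_eq_mul]

lemma exists_powersetCard_card_le_card_filter_add (A : Finset ι) (B : Finset α)
    (f : ι → α → Finset α) {k n : ℕ} (hk : 0 < k) (hA : #A ≤ #B) (hB : k * n ^ 3 ≤ #B)
    (hirr : ∀ a ∈ A, ∀ b ∈ B, b ∉ f a b) (hf : ∀ a ∈ A, ∀ b ∈ B, #(f a b) ≤ k) :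
    ∃ B' ∈ B.powersetCard n,
      #A ≤ #{a ∈ A | ∀ b ∈ B', Disjoint (f a b) B'} + k * n * (n - 1) := by
  have hnB : n ≤ #B :=
    (Nat.le_self_pow three_ne_zero n).trans ((Nat.le_mul_of_pos_left _ hk).trans hB)
  rcases lt_or_ge n 2 with hn | hn
  · obtain ⟨B', hB'⟩ := powersetCard_nonempty.2 hnB
    obtain ⟨hB'B, hB'n⟩ := mem_powersetCard.1 hB'
    refine ⟨B', hB', le_add_right (card_le_card fun a ha => mem_filter.2 ⟨ha, fun b hb => ?_⟩)⟩
    have hB'b : B' ⊆ {b} := fun c hc => mem_singleton.2 (card_le_one.1 (by omega) c hc b hb)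
    exact disjoint_of_subset_right hB'b (disjoint_singleton_right.2 (hirr a ha b (hB'B hb)))
  · obtain ⟨B', hB', hbad⟩ :=
      exists_powersetCard_card_filter_mul_choose_two_le A B f hirr hf hn hnB
    refine ⟨B', hB', ?_⟩
    rw [← card_filter_add_card_filter_not (p := fun a => ∀ b ∈ B', Disjoint (f a b) B')]
    push Not
    gcongr
    have hT : k * n * (n - 1) + 2 ≤ #B := by
      obtain ⟨p, rfl⟩ : ∃ p, n = p + 2 := ⟨n - 2, by omega⟩
      rw [show p + 2 - 1 = p + 1 by omega]
      nlinarith [Nat.mul_le_mul_left k (show 6 ≤ (p + 2) * (p * p + 3 * p + 3) by nlinarith)]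
    refine Nat.le_of_mul_mul_sub_one_le ?_ hT
    calc _ = #{a ∈ A | ∃ b ∈ B', ¬Disjoint (f a b) B'} * (#B).choose 2 * 2 := by
          rw [mul_assoc, Nat.choose_two_mul_two]
      _ ≤ #B * #B * k * n.choose 2 * 2 := Nat.mul_le_mul_right 2 (hbad.trans (by gcongr))
      _ = _ := by rw [mul_assoc _ (n.choose 2), Nat.choose_two_mul_two]; ring

end Finset

theorem stmt7_general {α : Type*} [DecidableEq α] (k n : ℕ) (hk : 0 < k)
    (A B : Finset α) (hsquare : A.card = B.card)
    (m : α → α → Finset α)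
    (hentry : ∀ a ∈ A, ∀ b ∈ B, m a b ⊆ (A ∪ B) \ {a, b})
    (hsize : ∀ a ∈ A, ∀ b ∈ B, (m a b).card ≤ k)
    (hproper : ¬ ∃ (A' B' : Finset α), A' ⊆ A ∧ B' ⊆ B ∧ A'.card = n ∧ B'.card = n ∧
      ∀ a ∈ A', ∀ b ∈ B', m a b ∩ (A' ∪ B') = ∅) :
    A.card < k * n ^ 3 := by
  by_contra! hN
  apply hproper
  have hirr : ∀ a ∈ A, ∀ b ∈ B, a ∉ m a b ∧ b ∉ m a b := fun a ha b hb => by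
    have := hentry a ha b hb
    exact ⟨fun h => by simpa using this h, fun h => by simpa using this h⟩
  obtain ⟨B', hB', hS⟩ := exists_powersetCard_card_le_card_filter_add A B m hk hsquare.le
    (hsquare ▸ hN) (fun a ha b hb => (hirr a ha b hb).2) hsize
  obtain ⟨hB'B, hB'n⟩ := mem_powersetCard.1 hB'
  set S := {a ∈ A | ∀ b ∈ B', Disjoint (m a b) B'}
  have hSA : S ⊆ A := filter_subset _ _
  have hdeg : ∀ a ∈ S, #(B'.biUnion (m a)) ≤ k * n := fun a ha =>
    (card_biUnion_le_card_mul _ _ _ fun b hb => hsize a (hSA ha) b (hB'B hb)).trans_eq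
      (by rw [hB'n, mul_comm])
  have hnS : n * (2 * (k * n) + 1) ≤ #S + 2 * (k * n) := by
    rcases n with _ | p
    · simp
    · rw [Nat.add_sub_cancel] at hS
      nlinarith [Nat.le_self_pow three_ne_zero p, Nat.le_mul_of_pos_left (p ^ 3) hk]
  obtain ⟨A', hA'S, hA'n, hA'⟩ := exists_subset_card_eq_forall_disjoint (fun a => B'.biUnion (m a))
    (k * n) n hdeg (fun a ha h => by
      obtain ⟨b, hb, hab⟩ := mem_biUnion.1 h
      exact (hirr a (hSA ha) b (hB'B hb)).1 hab) hnS
  refine ⟨A', B', hA'S.trans hSA, hB'B, hA'n, hB'n, fun a ha b hb => ?_⟩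
  rw [inter_union_distrib_left, union_eq_empty, ← disjoint_iff_inter_eq_empty,
    ← disjoint_iff_inter_eq_empty]
  exact ⟨(hA' a ha).mono_left (subset_biUnion_of_mem (m a) hb), (mem_filter.1 (hA'S ha)).2 b hb⟩

/-- a `k`-interference square matrix (rows `A`, columns `B`, entries
`m a b ⊆ (A ∪ B) \ {a, b}` of size at most `k`) with no proper (all entries empty)
square submatrix of size `n` has size less than `k · n³`. -/
theorem stmt7 {α : Type*} [DecidableEq α] (k n : ℕ) (hk : 0 < k)
    (A B : Finset α) (hdisj : Disjoint A B) (hsquare : A.card = B.card)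
    (m : α → α → Finset α)
    (hentry : ∀ a ∈ A, ∀ b ∈ B, m a b ⊆ (A ∪ B) \ {a, b})
    (hsize : ∀ a ∈ A, ∀ b ∈ B, (m a b).card ≤ k)
    (hproper : ¬ ∃ (A' B' : Finset α), A' ⊆ A ∧ B' ⊆ B ∧ A'.card = n ∧ B'.card = n ∧
      ∀ a ∈ A', ∀ b ∈ B', m a b ∩ (A' ∪ B') = ∅) :
    A.card < k * n ^ 3 :=
  stmt7_general k n hk A B hsquare m hentry hsize hproper
end
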